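/- arXiv:2401.03986 — 9 statements merged into one kernel-verified Lean document; each statement's English description precedes it below -/
import Mathlib

section
/- Let a : ℕ → ℝ be any sequence with a(0) = 1. Define D^a_n := n! * ∑_{m=0}^{n} (-1)^m a(m)/m! and μ_m(x) := ∑_{j=0}^{m} C(m,j) (-1)^j a(j) x^{m-j}. Then for all n ≥ 0 and all real x: n! * ∑_{m=0}^{n} μ_m(x)/m! = ∑_{l=0}^{n} C(n,l) * D^a_l * x^{n-l}. -/
open Finset

private lemma coef_eq (n m j : ℕ) (hjm : j ≤ m) (hmn : m ≤ n) :
    (n.factorial : ℝ) * (m.choose j : ℝ) / (m.factorial : ℝ) =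
      (n.choose (n + j - m) : ℝ) * ((n + j - m).factorial : ℝ) / (j.factorial : ℝ) := by
  have h1 : n + j - m ≤ n := by omega
  have h2 : n - (n + j - m) = m - j := by omega
  have key : n.factorial * (m.choose j * j.factorial * (m - j).factorial) =
      n.choose (n + j - m) * (n + j - m).factorial * (m - j).factorial * m.factorial := by
    rw [Nat.choose_mul_factorial_mul_factorial hjm, ← h2,
      Nat.choose_mul_factorial_mul_factorial h1]
  have keyR : (n.factorial : ℝ) * ((m.choose j : ℝ) * j.factorial * (m - j).factorial) =
      (n.choose (n + j - m) : ℝ) * ((n + j - m).factorial : ℝ) * ((m - j).factorial : ℝ) *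
        (m.factorial : ℝ) := by exact_mod_cast key
  have hm : (m.factorial : ℝ) ≠ 0 := Nat.cast_ne_zero.mpr m.factorial_ne_zero
  have hj : (j.factorial : ℝ) ≠ 0 := Nat.cast_ne_zero.mpr j.factorial_ne_zero
  have hmj : ((m - j).factorial : ℝ) ≠ 0 := Nat.cast_ne_zero.mpr (m - j).factorial_ne_zero
  rw [div_eq_div_iff hm hj]
  apply mul_right_cancel₀ hmj
  linear_combination keyR

theorem stmt_3 (a : ℕ → ℝ) (ha : a 0 = 1)
    (D : ℕ → ℝ)
    (hD : ∀ n, D n = (n.factorial : ℝ) *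
      ∑ m ∈ Finset.range (n + 1), (-1 : ℝ) ^ m * a m / m.factorial)
    (μ : ℕ → ℝ → ℝ)
    (hμ : ∀ m x, μ m x = ∑ j ∈ Finset.range (m + 1),
      (m.choose j : ℝ) * (-1 : ℝ) ^ j * a j * x ^ (m - j))
    (n : ℕ) (x : ℝ) :
    (n.factorial : ℝ) * ∑ m ∈ Finset.range (n + 1), μ m x / m.factorial =
      ∑ l ∈ Finset.range (n + 1), (n.choose l : ℝ) * D l * x ^ (n - l) := by
  calc (n.factorial : ℝ) * ∑ m ∈ range (n + 1), μ m x / m.factorial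
      = ∑ m ∈ range (n + 1), ∑ j ∈ range (m + 1),
          (n.factorial : ℝ) * (m.choose j : ℝ) / m.factorial *
            ((-1 : ℝ) ^ j * a j * x ^ (m - j)) := by
        rw [Finset.mul_sum]
        refine sum_congr rfl fun m _ => ?_
        rw [hμ, Finset.sum_div, Finset.mul_sum]
        refine sum_congr rfl fun j _ => ?_
        ring
    _ = ∑ j ∈ range (n + 1), ∑ m ∈ Finset.Icc j n,
          (n.factorial : ℝ) * (m.choose j : ℝ) / m.factorial *
            ((-1 : ℝ) ^ j * a j * x ^ (m - j)) := by
        refine Finset.sum_comm' fun m j => ?_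
        simp only [mem_range, Finset.mem_Icc]
        omega
    _ = ∑ j ∈ range (n + 1), ∑ l ∈ Finset.Icc j n,
          (n.choose l : ℝ) * ((l.factorial : ℝ) * ((-1 : ℝ) ^ j * a j / j.factorial)) *
            x ^ (n - l) := by
        refine sum_congr rfl fun j hj => ?_
        rw [mem_range] at hj
        refine Finset.sum_nbij' (fun m => n + j - m) (fun l => n + j - l) ?_ ?_ ?_ ?_ ?_
        · intro m hm; rw [Finset.mem_Icc] at *; omega
        · intro l hl; rw [Finset.mem_Icc] at *; omega
        · intro m hm; rw [Finset.mem_Icc] at hm; omega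
        · intro l hl; rw [Finset.mem_Icc] at hl; omega
        · intro m hm
          rw [Finset.mem_Icc] at hm
          rw [coef_eq n m j hm.1 hm.2]
          have h3 : n - (n + j - m) = m - j := by omega
          rw [h3]
          ring
    _ = ∑ l ∈ range (n + 1), ∑ j ∈ range (l + 1),
          (n.choose l : ℝ) * ((l.factorial : ℝ) * ((-1 : ℝ) ^ j * a j / j.factorial)) *
            x ^ (n - l) := by
        refine Finset.sum_comm' (s' := fun l => range (l + 1)) fun j l => ?_
        simp only [mem_range, Finset.mem_Icc]
        omega
    _ = ∑ l ∈ range (n + 1), (n.choose l : ℝ) * D l * x ^ (n - l) := by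
        refine sum_congr rfl fun l _ => ?_
        rw [hD, Finset.mul_sum, Finset.mul_sum, Finset.sum_mul]
end

section
/- Let a : ℕ → ℝ with a(0) = 1. Define D^a_n := n! * ∑_{m=0}^{n} (-1)^m a(m)/m!, the probabilistic derangement polynomial D^a_n(x) := ∑_{l=0}^{n} C(n,l) D^a_l x^{n-l}, and μ_n(x) := ∑_{j=0}^{n} C(n,j)(-1)^j a(j) x^{n-j}. Then for all n ≥ 1 and all real x: D^a_n(x) - n * D^a_{n-1}(x) = μ_n(x). -/
/-!
Both `D_n(x)` and `μ_n(x)` are Appell polynomials `∑ₗ C(n,l) c_l x^(n-l)`, with coefficients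
`c_l = D_l` and `c_l = (-1)^l a_l`. Since `n C(n-1,l) = (l+1) C(n,l+1)`, the operation
`P_n ↦ P_n - n P_{n-1}` acts on the coefficients as `c_k ↦ c_k - k c_{k-1}`, and on the
derangement numbers this gives `D_k - k D_{k-1} = (-1)^k a_k`, read off from the last term of the
defining sum.
-/

open Finset Nat

section Appell

variable {R : Type*} [CommRing R]

def appellPoly (c : ℕ → R) (n : ℕ) (x : R) : R :=
  ∑ l ∈ range (n + 1), (n.choose l : R) * c l * x ^ (n - l)

theorem appellPoly_sub_mul_pred (c : ℕ → R) (n : ℕ) (x : R) :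
    appellPoly c n x - n * appellPoly c (n - 1) x =
      appellPoly (fun k => c k - k * c (k - 1)) n x := by
  cases n with
  | zero => simp [appellPoly]
  | succ m =>
    have hshift : (m + 1 : R) * appellPoly c m x =
        ∑ l ∈ range (m + 1), ((m + 1).choose (l + 1) : R) * ((l + 1) * c l) * x ^ (m - l) := by
      rw [appellPoly, mul_sum]
      refine sum_congr rfl fun l _ => ?_
      have h := congrArg (Nat.cast : ℕ → R) (add_one_mul_choose_eq m l)
      push_cast at h
      linear_combination (c l * x ^ (m - l)) * h
    simp only [appellPoly, add_tsub_cancel_right, cast_add, cast_one] at hshift ⊢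
    rw [hshift, sum_range_succ' _ (m + 1), sum_range_succ' _ (m + 1), add_sub_right_comm,
      ← sum_sub_distrib]
    congr 1
    · refine sum_congr rfl fun l _ => ?_
      simp only [add_tsub_add_eq_tsub_right, add_tsub_cancel_right, cast_add, cast_one]
      ring
    · simp

end Appell

section Derangement

variable {K : Type*} [Field K] [CharZero K]

def probDerangement (a : ℕ → K) (n : ℕ) : K :=
  n ! * ∑ m ∈ range (n + 1), (-1) ^ m * a m / m !

theorem probDerangement_sub_mul_pred (a : ℕ → K) (n : ℕ) :
    probDerangement a n - n * probDerangement a (n - 1) = (-1) ^ n * a n := by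
  cases n with
  | zero => simp [probDerangement]
  | succ m =>
    have hfac : ((m + 1)! : K) ≠ 0 := by exact_mod_cast factorial_ne_zero (m + 1)
    rw [probDerangement, probDerangement, add_tsub_cancel_right, sum_range_succ, mul_add,
      mul_div_cancel₀ _ hfac, factorial_succ, cast_mul]
    push_cast
    ring

end Derangement

theorem stmt_4_general (a : ℕ → ℝ)
    (D : ℕ → ℝ)
    (hD : ∀ n, D n = (n.factorial : ℝ) *
      ∑ m ∈ Finset.range (n + 1), (-1 : ℝ) ^ m * a m / m.factorial)
    (Dp : ℕ → ℝ → ℝ)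
    (hDp : ∀ n x, Dp n x = ∑ l ∈ Finset.range (n + 1), (n.choose l : ℝ) * D l * x ^ (n - l))
    (μ : ℕ → ℝ → ℝ)
    (hμ : ∀ n x, μ n x = ∑ j ∈ Finset.range (n + 1),
      (n.choose j : ℝ) * (-1 : ℝ) ^ j * a j * x ^ (n - j))
    (n : ℕ) (x : ℝ) :
    Dp n x - n * Dp (n - 1) x = μ n x := by
  obtain rfl : D = probDerangement a := funext hD
  calc Dp n x - n * Dp (n - 1) x
      = appellPoly (probDerangement a) n x - n * appellPoly (probDerangement a) (n - 1) x := by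
        rw [hDp, hDp, appellPoly, appellPoly]
    _ = appellPoly (fun k => (-1) ^ k * a k) n x := by
        simp only [appellPoly_sub_mul_pred, probDerangement_sub_mul_pred]
    _ = μ n x := by
        simp only [hμ, appellPoly, mul_assoc]

theorem stmt_4 (a : ℕ → ℝ) (ha : a 0 = 1)
    (D : ℕ → ℝ)
    (hD : ∀ n, D n = (n.factorial : ℝ) *
      ∑ m ∈ Finset.range (n + 1), (-1 : ℝ) ^ m * a m / m.factorial)
    (Dp : ℕ → ℝ → ℝ)
    (hDp : ∀ n x, Dp n x = ∑ l ∈ Finset.range (n + 1), (n.choose l : ℝ) * D l * x ^ (n - l))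
    (μ : ℕ → ℝ → ℝ)
    (hμ : ∀ n x, μ n x = ∑ j ∈ Finset.range (n + 1),
      (n.choose j : ℝ) * (-1 : ℝ) ^ j * a j * x ^ (n - j))
    (n : ℕ) (hn : 1 ≤ n) (x : ℝ) :
    Dp n x - n * Dp (n - 1) x = μ n x :=
  stmt_4_general a D hD Dp hDp μ hμ n x
end

section
/- Let a : ℕ → ℝ with a(0) = 1. Define D^a_n := n! * ∑_{m=0}^{n} (-1)^m a(m)/m! and the probabilistic r-derangement numbers D^{(r,a)}_n := n! * ∑_{k=r}^{n} C(k,r) (-1)^{n-k} a(n-k)/(n-k)!. Then for all n ≥ r ≥ 1: D^{(r,a)}_n = n! * ∑_{l=r}^{n} C(l-1, r-1) * D^a_{n-l}/(n-l)!. -/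
theorem stmt_5 (a : ℕ → ℝ) (ha : a 0 = 1)
    (D : ℕ → ℝ)
    (hD : ∀ n, D n = (n.factorial : ℝ) *
      ∑ m ∈ Finset.range (n + 1), (-1 : ℝ) ^ m * a m / m.factorial)
    (Dr : ℕ → ℕ → ℝ)
    (hDr : ∀ r n, Dr r n = (n.factorial : ℝ) *
      ∑ k ∈ Finset.Icc r n, (k.choose r : ℝ) * (-1 : ℝ) ^ (n - k) * a (n - k) / (n - k).factorial)
    (r n : ℕ) (hr : 1 ≤ r) (hn : r ≤ n) :
    Dr r n = (n.factorial : ℝ) *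
      ∑ l ∈ Finset.Icc r n, ((l - 1).choose (r - 1) : ℝ) * D (n - l) / (n - l).factorial := by
  -- hockey stick
  have hstick : ∀ K : ℕ, r ≤ K →
      ∑ l ∈ Finset.Icc r K, (l - 1).choose (r - 1) = K.choose r := by
    intro K hK
    have h1 : Finset.Icc r K = (Finset.Icc (r - 1) (K - 1)).map
        ⟨Nat.succ, Nat.succ_injective⟩ := by
      ext x
      simp only [Finset.mem_Icc, Finset.mem_map, Function.Embedding.coeFn_mk]
      constructor
      · intro ⟨h1, h2⟩; exact ⟨x - 1, ⟨by omega, by omega⟩, by omega⟩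
      · rintro ⟨y, ⟨hy1, hy2⟩, rfl⟩; omega
    rw [h1, Finset.sum_map]
    simp only [Function.Embedding.coeFn_mk, Nat.succ_sub_one]
    rw [Nat.sum_Icc_choose]
    congr 1 <;> omega
  rw [hDr]
  congr 1
  have hR : ∀ l ∈ Finset.Icc r n, ((l - 1).choose (r - 1) : ℝ) * D (n - l) / (n - l).factorial
      = ∑ m ∈ Finset.range (n - l + 1),
          ((l - 1).choose (r - 1) : ℝ) * ((-1 : ℝ) ^ m * a m / m.factorial) := by
    intro l hl
    rw [hD, ← Finset.mul_sum]
    have hf : ((n - l).factorial : ℝ) ≠ 0 := Nat.cast_ne_zero.mpr (Nat.factorial_ne_zero _)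
    field_simp
  rw [Finset.sum_congr rfl hR]
  have hswap : (∑ l ∈ Finset.Icc r n, ∑ m ∈ Finset.range (n - l + 1),
      ((l - 1).choose (r - 1) : ℝ) * ((-1 : ℝ) ^ m * a m / m.factorial))
      = ∑ m ∈ Finset.range (n - r + 1), ∑ l ∈ Finset.Icc r (n - m),
        ((l - 1).choose (r - 1) : ℝ) * ((-1 : ℝ) ^ m * a m / m.factorial) := by
    refine Finset.sum_comm' ?_
    intro l m
    simp only [Finset.mem_Icc, Finset.mem_range]
    omega
  rw [hswap]
  have hRHS : ∀ m ∈ Finset.range (n - r + 1),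
      (∑ l ∈ Finset.Icc r (n - m),
        ((l - 1).choose (r - 1) : ℝ) * ((-1 : ℝ) ^ m * a m / m.factorial))
      = ((n - m).choose r : ℝ) * ((-1 : ℝ) ^ m * a m / m.factorial) := by
    intro m hm
    rw [← Finset.sum_mul]
    congr 1
    rw [← Nat.cast_sum, hstick (n - m) (by simp at hm; omega)]
  rw [Finset.sum_congr rfl hRHS]
  -- now reindex LHS with k = n - m
  refine Finset.sum_nbij' (fun k => n - k) (fun m => n - m) ?_ ?_ ?_ ?_ ?_
  · intro k hk; simp only [Finset.mem_Icc] at hk; simp; omega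
  · intro m hm; simp only [Finset.mem_range] at hm; simp only [Finset.mem_Icc]; omega
  · intro k hk; simp only [Finset.mem_Icc] at hk; show n - (n - k) = k; omega
  · intro m hm; simp only [Finset.mem_range] at hm; show n - (n - m) = m; omega
  · intro k hk
    simp only [Finset.mem_Icc] at hk
    have : n - (n - k) = k := by omega
    rw [this]
    ring
end

section
/- Let a : ℕ → ℝ with a(0) = 1 and let r ≥ 0. Define D^{(r,a)}_n := n! * ∑_{k=r}^{n} C(k,r) (-1)^{n-k} a(n-k)/(n-k)! for n ≥ r. Then for all n ≥ 0: a(n) = n! * ∑_{k=0}^{n} (-1)^k * C(r+1, n-k) * D^{(r,a)}_{k+r}/(k+r)!. -/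
open Finset PowerSeries

lemma poly_coeff_one_sub_pow (d q : ℕ) :
    ((1 - Polynomial.X : Polynomial ℝ) ^ d).coeff q = (-1 : ℝ) ^ q * (d.choose q : ℝ) := by
  induction d generalizing q with
  | zero =>
    cases q with
    | zero => simp
    | succ q => simp [Polynomial.coeff_one]
  | succ d ih =>
    have h : (1 - Polynomial.X : Polynomial ℝ) ^ (d + 1)
        = (1 - Polynomial.X) ^ d - (1 - Polynomial.X) ^ d * Polynomial.X := by ring
    cases q with
    | zero =>
      rw [h]
      simp [Polynomial.coeff_sub, ih, Polynomial.coeff_mul_X_zero]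
    | succ q =>
      rw [h]
      rw [Polynomial.coeff_sub, Polynomial.coeff_mul_X, ih, ih]
      rw [Nat.choose_succ_succ]
      push_cast
      ring

lemma coeff_one_sub_pow (d q : ℕ) :
    (PowerSeries.coeff (R := ℝ) q) ((1 - PowerSeries.X : ℝ⟦X⟧) ^ d) =
      (-1 : ℝ) ^ q * (d.choose q : ℝ) := by
  have hp := poly_coeff_one_sub_pow d
  rw [← hp q, ← Polynomial.coeff_coe]
  rw [Polynomial.coe_pow, Polynomial.coe_sub, Polynomial.coe_one, Polynomial.coe_X]

lemma key (r N : ℕ) :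
    ∑ m ∈ Finset.range (N + 1),
        (-1 : ℝ) ^ m * ((r + 1).choose (N - m) : ℝ) * ((m + r).choose r : ℝ)
      = if N = 0 then 1 else 0 := by
  by_cases hN : N = 0
  · subst hN; simp
  · rw [if_neg hN]
    have h := PowerSeries.mk_add_choose_mul_one_sub_pow_eq_one ℝ r
    have h2 := congrArg (PowerSeries.coeff (R := ℝ) N) h
    rw [PowerSeries.coeff_mul, PowerSeries.coeff_one,
      Finset.Nat.sum_antidiagonal_eq_sum_range_succ
        (fun p q => (PowerSeries.coeff (R := ℝ) p) (PowerSeries.mk fun n => (Nat.choose (r + n) r : ℝ)) *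
          (PowerSeries.coeff (R := ℝ) q) ((1 - PowerSeries.X : ℝ⟦X⟧) ^ (r + 1))), if_neg hN] at h2
    simp only [PowerSeries.coeff_mk, coeff_one_sub_pow] at h2
    have hsign : ∀ m ∈ Finset.range (N + 1),
        ((Nat.choose (r + m) r : ℝ) * ((-1 : ℝ) ^ (N - m) * ((r + 1).choose (N - m) : ℝ)))
          = (-1 : ℝ) ^ N *
            ((-1 : ℝ) ^ m * ((r + 1).choose (N - m) : ℝ) * ((m + r).choose r : ℝ)) := by
      intro m hm
      rw [mem_range] at hm
      have h1 : (-1 : ℝ) ^ N * (-1 : ℝ) ^ m = (-1 : ℝ) ^ (N - m) := by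
        rw [← pow_add, show N + m = (N - m) + 2 * m by omega, pow_add, pow_mul]
        norm_num
      rw [← h1, add_comm r m]
      ring
    rw [Finset.sum_congr rfl hsign, ← Finset.mul_sum] at h2
    have hne : (-1 : ℝ) ^ N ≠ 0 := pow_ne_zero _ (by norm_num)
    exact (mul_eq_zero.mp h2).resolve_left hne

theorem stmt_6 (a : ℕ → ℝ) (ha : a 0 = 1) (r : ℕ)
    (Dr : ℕ → ℝ)
    (hDr : ∀ n, r ≤ n → Dr n = (n.factorial : ℝ) *
      ∑ k ∈ Finset.Icc r n, (k.choose r : ℝ) * (-1 : ℝ) ^ (n - k) * a (n - k) / (n - k).factorial)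
    (n : ℕ) :
    a n = (n.factorial : ℝ) *
      ∑ k ∈ Finset.range (n + 1),
        (-1 : ℝ) ^ k * ((r + 1).choose (n - k) : ℝ) * Dr (k + r) / (k + r).factorial := by
  set g : ℕ → ℕ → ℝ := fun k l =>
    (-1 : ℝ) ^ k * (-1 : ℝ) ^ l * ((r + 1).choose (n - k) : ℝ) * ((k - l + r).choose r : ℝ)
      * a l / (l.factorial : ℝ) with hg
  have step1 : ∀ k ∈ Finset.range (n + 1),
      (-1 : ℝ) ^ k * ((r + 1).choose (n - k) : ℝ) * Dr (k + r) / (k + r).factorial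
        = ∑ l ∈ Finset.range (k + 1), g k l := by
    intro k hk
    rw [hDr (k + r) (Nat.le_add_left r k)]
    have hfac : ((k + r).factorial : ℝ) ≠ 0 := Nat.cast_ne_zero.mpr (Nat.factorial_ne_zero _)
    have cancel : ∀ c s : ℝ,
        c * (((k + r).factorial : ℝ) * s) / ((k + r).factorial : ℝ) = c * s := by
      intro c s; field_simp
    rw [cancel]
    rw [← Finset.Ico_add_one_right_eq_Icc, Finset.sum_Ico_eq_sum_range]
    have hcard : k + r + 1 - r = k + 1 := by omega
    rw [hcard]
    have inner_eq : ∀ i ∈ Finset.range (k + 1),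
        ((r + i).choose r : ℝ) * (-1 : ℝ) ^ (k + r - (r + i)) * a (k + r - (r + i))
            / ((k + r - (r + i)).factorial : ℝ)
          = ((r + i).choose r : ℝ) * (-1 : ℝ) ^ (k - i) * a (k - i) / ((k - i).factorial : ℝ) := by
      intro i hi
      rw [show k + r - (r + i) = k - i by omega]
    rw [Finset.sum_congr rfl inner_eq]
    rw [← Finset.sum_range_reflect (fun i => ((r + i).choose r : ℝ) * (-1 : ℝ) ^ (k - i)
        * a (k - i) / ((k - i).factorial : ℝ)) (k + 1)]
    rw [Finset.mul_sum]
    refine Finset.sum_congr rfl fun l hl => ?_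
    rw [Finset.mem_range] at hl
    have h1 : k + 1 - 1 - l = k - l := by omega
    have h2 : k - (k - l) = l := by omega
    rw [h1, h2, hg]
    simp only []
    rw [add_comm r (k - l)]
    ring
  rw [Finset.sum_congr rfl step1]
  simp only [Finset.range_eq_Ico]
  rw [← Finset.sum_Ico_Ico_comm 0 (n + 1) (fun l k => g k l)]
  have step2 : ∀ l ∈ Finset.Ico 0 (n + 1),
      (∑ k ∈ Finset.Ico l (n + 1), g k l)
        = if l = n then a n / (n.factorial : ℝ) else 0 := by
    intro l hl
    rw [Finset.mem_Ico] at hl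
    have hln : l ≤ n := by omega
    rw [Finset.sum_Ico_eq_sum_range, show n + 1 - l = (n - l) + 1 by omega]
    have inner_eq : ∀ m ∈ Finset.range ((n - l) + 1),
        g (l + m) l = a l / (l.factorial : ℝ) *
          ((-1 : ℝ) ^ m * ((r + 1).choose ((n - l) - m) : ℝ) * ((m + r).choose r : ℝ)) := by
      intro m hm
      rw [Finset.mem_range] at hm
      rw [hg]
      simp only []
      rw [show l + m - l = m by omega, show n - (l + m) = n - l - m by omega]
      have hsg : (-1 : ℝ) ^ (l + m) * (-1 : ℝ) ^ l = (-1 : ℝ) ^ m := by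
        rw [← pow_add, show l + m + l = m + 2 * l by omega, pow_add, pow_mul]
        norm_num
      rw [← hsg]
      ring
    rw [Finset.sum_congr rfl inner_eq, ← Finset.mul_sum, key r (n - l)]
    by_cases hleq : l = n
    · rw [if_pos hleq, if_pos (by omega), mul_one, hleq]
    · rw [if_neg hleq, if_neg (by omega), mul_zero]
  rw [Finset.sum_congr rfl step2]
  rw [Finset.sum_ite_eq' (Finset.Ico 0 (n + 1)) n (fun _ => a n / (n.factorial : ℝ))]
  rw [if_pos (by simp), mul_div_cancel₀]
  exact Nat.cast_ne_zero.mpr (Nat.factorial_ne_zero _)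
end

section
/- Let a : ℕ → ℝ with a(0) = 1 and let r ≥ 0. Define D^a_n := n! * ∑_{m=0}^{n} (-1)^m a(m)/m! and D^{(r,a)}_n := n! * ∑_{k=r}^{n} C(k,r)(-1)^{n-k} a(n-k)/(n-k)!. Then for all n ≥ 0: D^{(r,a)}_{n+r} = (n+r)! * ∑_{l=0}^{n} C(r+l-1, l) * D^a_{n-l}/(n-l)!. -/
lemma hockey_aux (r L : ℕ) :
    ∑ l ∈ Finset.range (L + 1), (r + l - 1).choose l = (r + L).choose L := by
  induction L with
  | zero => simp
  | succ L ih =>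
    rw [Finset.sum_range_succ, ih, show r + (L + 1) - 1 = r + L from by omega,
      show r + (L + 1) = (r + L) + 1 from by omega, Nat.choose_succ_succ]

theorem stmt_7 (a : ℕ → ℝ) (ha : a 0 = 1) (r : ℕ)
    (D : ℕ → ℝ)
    (hD : ∀ n, D n = (n.factorial : ℝ) *
      ∑ m ∈ Finset.range (n + 1), (-1 : ℝ) ^ m * a m / m.factorial)
    (Dr : ℕ → ℝ)
    (hDr : ∀ n, r ≤ n → Dr n = (n.factorial : ℝ) *
      ∑ k ∈ Finset.Icc r n, (k.choose r : ℝ) * (-1 : ℝ) ^ (n - k) * a (n - k) / (n - k).factorial)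
    (n : ℕ) :
    Dr (n + r) = ((n + r).factorial : ℝ) *
      ∑ l ∈ Finset.range (n + 1), ((r + l - 1).choose l : ℝ) * D (n - l) / (n - l).factorial := by
  have hL : Dr (n + r) = ((n + r).factorial : ℝ) *
      ∑ m ∈ Finset.range (n + 1),
        ((r + n - m).choose (n - m) : ℝ) * ((-1 : ℝ) ^ m * a m / m.factorial) := by
    rw [hDr (n + r) (Nat.le_add_left r n)]
    congr 1
    rw [show Finset.Icc r (n + r) = Finset.Ico r (n + r + 1) from (Finset.Ico_add_one_right_eq_Icc r (n+r)).symm,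
      Finset.sum_Ico_eq_sum_range, show n + r + 1 - r = n + 1 from by omega,
      ← Finset.sum_range_reflect]
    apply Finset.sum_congr rfl
    intro i hi
    simp only [Finset.mem_range, Nat.lt_succ_iff] at hi
    rw [show n + 1 - 1 - i = n - i from by omega]
    have h1 : r + (n - i) = r + n - i := by omega
    have h2 : n + r - (r + n - i) = i := by omega
    have h3 : (r + n - i).choose r = (r + n - i).choose (n - i) := by
      rw [show n - i = (r + n - i) - r from by omega, Nat.choose_symm (by omega)]
    rw [h1, h2, h3]
    ring
  rw [hL]
  congr 1
  have key : ∀ m ∈ Finset.range (n + 1),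
      ((r + n - m).choose (n - m) : ℝ) = ∑ l ∈ Finset.range (n - m + 1),
        ((r + l - 1).choose l : ℝ) := by
    intro m hm
    simp only [Finset.mem_range, Nat.lt_succ_iff] at hm
    rw [← Nat.cast_sum, hockey_aux r (n - m), show r + (n - m) = r + n - m from by omega]
  calc ∑ m ∈ Finset.range (n + 1),
        ((r + n - m).choose (n - m) : ℝ) * ((-1 : ℝ) ^ m * a m / m.factorial)
      = ∑ m ∈ Finset.range (n + 1), ∑ l ∈ Finset.range (n - m + 1),
          ((r + l - 1).choose l : ℝ) * ((-1 : ℝ) ^ m * a m / m.factorial) := by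
        refine Finset.sum_congr rfl fun m hm => ?_
        rw [key m hm, Finset.sum_mul]
    _ = ∑ l ∈ Finset.range (n + 1), ∑ m ∈ Finset.range (n - l + 1),
          ((r + l - 1).choose l : ℝ) * ((-1 : ℝ) ^ m * a m / m.factorial) := by
        rw [Finset.sum_comm' (t' := Finset.range (n + 1))
          (s' := fun l => Finset.range (n - l + 1))]
        intro x y
        simp only [Finset.mem_range, Nat.lt_succ_iff]
        omega
    _ = ∑ l ∈ Finset.range (n + 1),
          ((r + l - 1).choose l : ℝ) * D (n - l) / (n - l).factorial := by
        refine Finset.sum_congr rfl fun l hl => ?_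
        rw [hD (n - l), ← Finset.mul_sum]
        have hfac : ((n - l).factorial : ℝ) ≠ 0 := Nat.cast_ne_zero.mpr (Nat.factorial_ne_zero _)
        field_simp
end

section
/- Let a : ℕ → ℝ with a(0) = 1. Define d^a_m(x) := m! * ∑_{k=0}^{m} (-1)^k a(k) x^{m-k}/k! and the Fubini polynomials F_n(x) := ∑_{k=0}^{n} S(n,k) * k! * x^k, where S(n,k) are the Stirling numbers of the second kind. Then for all n ≥ 0 and all real x: ∑_{m=0}^{n} d^a_m(x) * S(n,m) = ∑_{m=0}^{n} ∑_{l=0}^{m} (-1)^l * S(m,l) * C(n,m) * a(l) * F_{n-m}(x). -/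
/-- Stirling numbers of the second kind. -/
def stirling2 : ℕ → ℕ → ℕ
  | 0, 0 => 1
  | 0, _ + 1 => 0
  | _ + 1, 0 => 0
  | n + 1, k + 1 => (k + 1) * stirling2 n (k + 1) + stirling2 n k

lemma stirling2_succ_succ (n k : ℕ) :
    stirling2 (n+1) (k+1) = (k+1) * stirling2 n (k+1) + stirling2 n k := rfl

lemma stirling2_eq_zero : ∀ {n k : ℕ}, n < k → stirling2 n k = 0 := by
  intro n
  induction n with
  | zero =>
    intro k h
    obtain ⟨j, rfl⟩ : ∃ j, k = j + 1 := ⟨k - 1, by omega⟩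
    rfl
  | succ n ih =>
    intro k h
    obtain ⟨j, rfl⟩ : ∃ j, k = j + 1 := ⟨k - 1, by omega⟩
    rw [stirling2_succ_succ, ih (by omega), ih (by omega), Nat.mul_zero]

lemma key_s9 : ∀ (n k i : ℕ),
    ∑ m ∈ Finset.range (n+1), n.choose m * (stirling2 m k * stirling2 (n-m) i)
      = (k+i).choose k * stirling2 n (k+i) := by
  intro n
  induction n with
  | zero =>
    intro k i
    simp only [Finset.sum_range_one, Nat.choose_self, Nat.choose_zero_right, Nat.zero_sub,
      Nat.sub_zero, one_mul]
    match k, i with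
    | 0, 0 => rfl
    | 0, i+1 => simp [stirling2]
    | k+1, 0 => simp [stirling2]
    | k+1, i+1 => simp [stirling2, stirling2_eq_zero]
  | succ n ih =>
    intro k i
    match i, k with
    | 0, k =>
      rw [Finset.sum_eq_single_of_mem (n+1) (Finset.self_mem_range_succ _)]
      · simp [stirling2]
      · intro m hm hne
        obtain ⟨j, hj⟩ : ∃ j, n + 1 - m = j + 1 := ⟨n - m, by simp at hm; omega⟩
        rw [hj]
        simp [stirling2]
    | i+1, 0 =>
      rw [Finset.sum_eq_single_of_mem 0 (Finset.mem_range.2 (by omega))]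
      · simp [stirling2]
      · intro m hm hne
        obtain ⟨j, rfl⟩ : ∃ j, m = j + 1 := ⟨m - 1, by omega⟩
        simp [stirling2]
    | i+1, k+1 =>
      have e1 : ∑ m ∈ Finset.range (n+2),
          (n+1).choose m * (stirling2 m (k+1) * stirling2 (n+1-m) (i+1))
          = ∑ m ∈ Finset.range (n+1),
            ((n.choose m + n.choose (m+1)) *
              (((k+1) * stirling2 m (k+1) + stirling2 m k) * stirling2 (n-m) (i+1))) := by
        rw [Finset.sum_range_succ']
        simp only [stirling2, Nat.choose_succ_succ]
        simp
      have e3 : ∑ m ∈ Finset.range (n+1),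
          n.choose (m+1) * (stirling2 (m+1) (k+1) * stirling2 (n-m) (i+1))
          = (i+1) * ((k+1+(i+1)).choose (k+1) * stirling2 n (k+1+(i+1)))
            + ((k+1+i).choose (k+1) * stirling2 n (k+1+i)) := by
        have h1 : ∑ m ∈ Finset.range (n+1),
            n.choose (m+1) * (stirling2 (m+1) (k+1) * stirling2 (n-m) (i+1))
            = ∑ m ∈ Finset.range (n+1),
              n.choose m * (stirling2 m (k+1) * stirling2 (n+1-m) (i+1)) := by
          rw [show (∑ m ∈ Finset.range (n+1),
              n.choose m * (stirling2 m (k+1) * stirling2 (n+1-m) (i+1)))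
              = ∑ m ∈ Finset.range (n+2),
                n.choose m * (stirling2 m (k+1) * stirling2 (n+1-m) (i+1)) from by
            rw [Finset.sum_range_succ
              (fun m => n.choose m * (stirling2 m (k+1) * stirling2 (n+1-m) (i+1))) (n+1)]
            simp [Nat.choose_succ_self]]
          rw [Finset.sum_range_succ'
            (fun m => n.choose m * (stirling2 m (k+1) * stirling2 (n+1-m) (i+1))) (n+1)]
          rw [show stirling2 0 (k+1) = 0 from rfl]
          simp [Nat.succ_sub_succ_eq_sub]
        have h2 : ∑ m ∈ Finset.range (n+1),
            n.choose m * (stirling2 m (k+1) * stirling2 (n+1-m) (i+1))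
            = ∑ m ∈ Finset.range (n+1),
              n.choose m * (stirling2 m (k+1) * ((i+1) * stirling2 (n-m) (i+1) + stirling2 (n-m) i)) := by
          apply Finset.sum_congr rfl
          intro m hm
          simp only [Finset.mem_range] at hm
          rw [show n + 1 - m = (n - m) + 1 from by omega, stirling2_succ_succ]
        have h3 : ∑ m ∈ Finset.range (n+1),
            n.choose m * (stirling2 m (k+1) * ((i+1) * stirling2 (n-m) (i+1) + stirling2 (n-m) i))
            = (i+1) * (∑ m ∈ Finset.range (n+1), n.choose m * (stirling2 m (k+1) * stirling2 (n-m) (i+1)))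
              + ∑ m ∈ Finset.range (n+1), n.choose m * (stirling2 m (k+1) * stirling2 (n-m) i) := by
          rw [Finset.mul_sum, ← Finset.sum_add_distrib]
          apply Finset.sum_congr rfl
          intro m _
          ring
        rw [h1, h2, h3, ih (k+1) (i+1), ih (k+1) i]
      rw [e1]
      have expand : ∀ m, (n.choose m + n.choose (m+1)) *
          (((k+1) * stirling2 m (k+1) + stirling2 m k) * stirling2 (n-m) (i+1))
          = (k+1) * (n.choose m * (stirling2 m (k+1) * stirling2 (n-m) (i+1)))
            + n.choose m * (stirling2 m k * stirling2 (n-m) (i+1))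
            + n.choose (m+1) * (stirling2 (m+1) (k+1) * stirling2 (n-m) (i+1)) := by
        intro m
        rw [stirling2_succ_succ]
        ring
      rw [Finset.sum_congr rfl (fun m _ => expand m)]
      rw [Finset.sum_add_distrib, Finset.sum_add_distrib, ← Finset.mul_sum]
      rw [ih (k+1) (i+1), ih k (i+1), e3]
      have hp : (k+1+(i+1)).choose (k+1) = (k+(i+1)).choose k + (k+1+i).choose (k+1) := by
        have := Nat.choose_succ_succ (k+i+1) k
        have h1 : k+1+(i+1) = (k+i+1)+1 := by omega
        have h2 : k+(i+1) = k+i+1 := by omega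
        have h3 : k+1+i = k+i+1 := by omega
        rw [h1, h2, h3, this]
      have hs : stirling2 (n+1) (k+1+(i+1)) =
          (k+1+(i+1)) * stirling2 n (k+1+(i+1)) + stirling2 n (k+i+1) := by
        have h1 : k+1+(i+1) = (k+i+1)+1 := by omega
        rw [h1, stirling2_succ_succ]
      rw [hs]
      have h2 : k+(i+1) = k+i+1 := by omega
      have h3 : k+1+i = k+i+1 := by omega
      rw [h2, h3] at *
      rw [hp]
      ring

lemma inner_eq (x : ℝ) (n l : ℕ) (hl : l < n + 1) :
    ∑ m ∈ Finset.Ico l (n+1), (m.factorial : ℝ) * x ^ (m - l) * (stirling2 n m : ℝ)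
      = (l.factorial : ℝ) * ∑ m ∈ Finset.Ico l (n+1),
          (stirling2 m l : ℝ) * (n.choose m : ℝ) *
            ∑ j ∈ Finset.range (n - m + 1), (stirling2 (n-m) j : ℝ) * (j.factorial : ℝ) * x ^ j := by
  have hR1 : ∀ m ∈ Finset.Ico l (n+1),
      (stirling2 m l : ℝ) * (n.choose m : ℝ) *
        ∑ j ∈ Finset.range (n - m + 1), (stirling2 (n-m) j : ℝ) * (j.factorial : ℝ) * x ^ j
      = ∑ j ∈ Finset.range (n+1),
          (stirling2 m l : ℝ) * (n.choose m : ℝ) * ((stirling2 (n-m) j : ℝ) * (j.factorial : ℝ) * x ^ j) := by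
    intro m hm
    rw [Finset.mul_sum]
    apply Finset.sum_subset
    · apply Finset.range_subset_range.2
      simp only [Finset.mem_Ico] at hm
      omega
    · intro j hj hnj
      simp only [Finset.mem_range] at hj hnj
      rw [stirling2_eq_zero (show n - m < j by omega)]
      simp
  rw [Finset.sum_congr rfl hR1]
  have hR2 : ∑ m ∈ Finset.Ico l (n+1), ∑ j ∈ Finset.range (n+1),
        (stirling2 m l : ℝ) * (n.choose m : ℝ) * ((stirling2 (n-m) j : ℝ) * (j.factorial : ℝ) * x ^ j)
      = ∑ m ∈ Finset.range (n+1), ∑ j ∈ Finset.range (n+1),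
        (stirling2 m l : ℝ) * (n.choose m : ℝ) * ((stirling2 (n-m) j : ℝ) * (j.factorial : ℝ) * x ^ j) := by
    apply Finset.sum_subset
    · intro m hm
      simp only [Finset.mem_Ico] at hm
      exact Finset.mem_range.2 hm.2
    · intro m hm hnm
      simp only [Finset.mem_range] at hm
      simp only [Finset.mem_Ico] at hnm
      rw [stirling2_eq_zero (show m < l by omega)]
      simp
  rw [hR2, Finset.sum_comm]
  have hR3 : ∀ j ∈ Finset.range (n+1),
      ∑ m ∈ Finset.range (n+1),
        (stirling2 m l : ℝ) * (n.choose m : ℝ) * ((stirling2 (n-m) j : ℝ) * (j.factorial : ℝ) * x ^ j)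
      = (((l+j).choose l * stirling2 n (l+j) : ℕ) : ℝ) * ((j.factorial : ℝ) * x ^ j) := by
    intro j _
    rw [← key_s9 n l j]
    push_cast
    rw [Finset.sum_mul]
    apply Finset.sum_congr rfl
    intro m _
    ring
  rw [Finset.sum_congr rfl hR3]
  rw [Finset.sum_Ico_eq_sum_range]
  have hrange : n + 1 - l = (n - l) + 1 := by omega
  have hL1 : ∑ i ∈ Finset.range (n+1-l),
      ((l+i).factorial : ℝ) * x ^ (l + i - l) * (stirling2 n (l+i) : ℝ)
      = ∑ i ∈ Finset.range (n+1),
        ((l+i).factorial : ℝ) * x ^ (l + i - l) * (stirling2 n (l+i) : ℝ) := by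
    apply Finset.sum_subset
    · apply Finset.range_subset_range.2; omega
    · intro i hi hni
      simp only [Finset.mem_range] at hi hni
      rw [stirling2_eq_zero (show n < l + i by omega)]
      simp
  rw [hL1, Finset.mul_sum]
  apply Finset.sum_congr rfl
  intro i _
  have hfac : (l+i).choose l * l.factorial * i.factorial = (l+i).factorial := by
    have := Nat.choose_mul_factorial_mul_factorial (Nat.le_add_right l i)
    rwa [Nat.add_sub_cancel_left] at this
  rw [Nat.add_sub_cancel_left, ← hfac]
  push_cast
  ring

theorem stmt_9 (a : ℕ → ℝ) (ha : a 0 = 1)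
    (d : ℕ → ℝ → ℝ)
    (hd : ∀ m x, d m x = (m.factorial : ℝ) *
      ∑ k ∈ Finset.range (m + 1), (-1 : ℝ) ^ k * a k * x ^ (m - k) / k.factorial)
    (F : ℕ → ℝ → ℝ)
    (hF : ∀ n x, F n x = ∑ k ∈ Finset.range (n + 1),
      (stirling2 n k : ℝ) * (k.factorial : ℝ) * x ^ k)
    (n : ℕ) (x : ℝ) :
    ∑ m ∈ Finset.range (n + 1), d m x * (stirling2 n m : ℝ) =
      ∑ m ∈ Finset.range (n + 1), ∑ l ∈ Finset.range (m + 1),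
        (-1 : ℝ) ^ l * (stirling2 m l : ℝ) * (n.choose m : ℝ) * a l * F (n - m) x := by
  simp only [hd, hF]
  calc ∑ m ∈ Finset.range (n+1),
        ((m.factorial : ℝ) * ∑ k ∈ Finset.range (m+1),
          (-1:ℝ)^k * a k * x^(m-k) / k.factorial) * (stirling2 n m : ℝ)
      = ∑ m ∈ Finset.Ico 0 (n+1), ∑ k ∈ Finset.Ico 0 (m+1),
          ((-1:ℝ)^k * a k) * ((m.factorial : ℝ) * x^(m-k) / k.factorial * (stirling2 n m : ℝ)) := by
        simp only [← Finset.range_eq_Ico]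
        apply Finset.sum_congr rfl
        intro m _
        rw [Finset.mul_sum, Finset.sum_mul]
        apply Finset.sum_congr rfl
        intro k _
        ring
    _ = ∑ k ∈ Finset.Ico 0 (n+1), ∑ m ∈ Finset.Ico k (n+1),
          ((-1:ℝ)^k * a k) * ((m.factorial : ℝ) * x^(m-k) / k.factorial * (stirling2 n m : ℝ)) := by
        rw [← Finset.sum_Ico_Ico_comm]
    _ = ∑ k ∈ Finset.Ico 0 (n+1), ∑ m ∈ Finset.Ico k (n+1),
          ((-1:ℝ)^k * a k) * ((stirling2 m k : ℝ) * (n.choose m : ℝ) *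
            ∑ j ∈ Finset.range (n - m + 1), (stirling2 (n-m) j : ℝ) * (j.factorial : ℝ) * x ^ j) := by
        apply Finset.sum_congr rfl
        intro k hk
        simp only [Finset.mem_Ico] at hk
        have hkf : (k.factorial : ℝ) ≠ 0 := Nat.cast_ne_zero.2 k.factorial_ne_zero
        calc ∑ m ∈ Finset.Ico k (n+1),
              ((-1:ℝ)^k * a k) * ((m.factorial : ℝ) * x^(m-k) / k.factorial * (stirling2 n m : ℝ))
            = ((-1:ℝ)^k * a k / k.factorial) *
                ∑ m ∈ Finset.Ico k (n+1), (m.factorial : ℝ) * x^(m-k) * (stirling2 n m : ℝ) := by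
              rw [Finset.mul_sum]
              apply Finset.sum_congr rfl
              intro m _
              ring
          _ = ((-1:ℝ)^k * a k / k.factorial) * ((k.factorial : ℝ) *
                ∑ m ∈ Finset.Ico k (n+1), (stirling2 m k : ℝ) * (n.choose m : ℝ) *
                  ∑ j ∈ Finset.range (n - m + 1), (stirling2 (n-m) j : ℝ) * (j.factorial : ℝ) * x ^ j) := by
              rw [inner_eq x n k hk.2]
          _ = ∑ m ∈ Finset.Ico k (n+1),
              ((-1:ℝ)^k * a k) * ((stirling2 m k : ℝ) * (n.choose m : ℝ) *
                ∑ j ∈ Finset.range (n - m + 1), (stirling2 (n-m) j : ℝ) * (j.factorial : ℝ) * x ^ j) := by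
              rw [Finset.mul_sum, Finset.mul_sum]
              apply Finset.sum_congr rfl
              intro m _
              field_simp
    _ = ∑ m ∈ Finset.Ico 0 (n+1), ∑ l ∈ Finset.Ico 0 (m+1),
          ((-1:ℝ)^l * a l) * ((stirling2 m l : ℝ) * (n.choose m : ℝ) *
            ∑ j ∈ Finset.range (n - m + 1), (stirling2 (n-m) j : ℝ) * (j.factorial : ℝ) * x ^ j) := by
        rw [Finset.sum_Ico_Ico_comm]
    _ = ∑ m ∈ Finset.range (n+1), ∑ l ∈ Finset.range (m+1),
          (-1:ℝ)^l * (stirling2 m l : ℝ) * (n.choose m : ℝ) * a l *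
            ∑ j ∈ Finset.range (n - m + 1), (stirling2 (n-m) j : ℝ) * (j.factorial : ℝ) * x ^ j := by
        simp only [← Finset.range_eq_Ico]
        apply Finset.sum_congr rfl
        intro m _
        apply Finset.sum_congr rfl
        intro l _
        ring
end

section
/- Define the derangement numbers D_k := k! * ∑_{i=0}^{k} (-1)^i/i! and derangement polynomials D_l(y) := ∑_{k=0}^{l} C(l,k) D_k y^{l-k}. Let a(k) := k! for all k (the moments of an exponential/Γ(1,1) random variable), and define D^a_n(x) := ∑_{l=0}^{n} C(n,l) * (l! * ∑_{m=0}^{l} (-1)^m a(m)/m!) * x^{n-l}. Then for all n ≥ 0 and all real x: D^a_n(x) = n! * ∑_{l=0}^{n} (-1)^l * D_l(1-x)/l!. -/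
open Finset in
private lemma realAlt' (s : ℕ) :
    ∑ i ∈ range (s+1), (-1:ℝ)^i * (s.choose i) = if s = 0 then 1 else 0 := by
  have h := Int.alternating_sum_range_choose (n := s)
  have h2 := congrArg (fun z : ℤ => (z : ℝ)) h
  push_cast at h2
  simpa using h2
open Finset in
private lemma mydiag {M : Type*} [AddCommMonoid M] (N : ℕ) (g : ℕ → ℕ → M) :
    ∑ i ∈ range (N+1), ∑ v ∈ range (N+1-i), g i v
      = ∑ s ∈ range (N+1), ∑ i ∈ range (s+1), g i (s - i) := by
  rw [Finset.sum_sigma', Finset.sum_sigma']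
  refine Finset.sum_nbij' (fun x : Σ _ : ℕ, ℕ ↦ (⟨x.1 + x.2, x.1⟩ : Σ _ : ℕ, ℕ))
    (fun x : Σ _ : ℕ, ℕ ↦ (⟨x.2, x.1 - x.2⟩ : Σ _ : ℕ, ℕ)) ?_ ?_ ?_ ?_ ?_ <;>
  simp only [Finset.mem_sigma, Finset.mem_range, Sigma.forall] <;>
  intro a b h
  · omega
  · omega
  · exact Sigma.ext (by simp) (by simp)
  · exact Sigma.ext (by simp; try omega) (by simp; try omega)
  · simp only [Nat.add_sub_cancel_left]

open Finset in
private lemma sumB (m : ℕ) :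
    ∑ k ∈ range (m+1),
      (m.choose k : ℝ) * ((k.factorial : ℝ) * ∑ i ∈ range (k+1), (-1:ℝ)^i / i.factorial)
      = (m.factorial : ℝ) := by
  rw [← Finset.sum_range_reflect]
  have h1 : ∀ k ∈ range (m+1),
      (m.choose (m + 1 - 1 - k) : ℝ) * (((m + 1 - 1 - k).factorial : ℝ) *
          ∑ i ∈ range ((m + 1 - 1 - k)+1), (-1:ℝ)^i / i.factorial)
      = ∑ i ∈ range (m+1-k), ((m.factorial : ℝ) / k.factorial) * ((-1:ℝ)^i / i.factorial) := by
    intro k hk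
    rw [mem_range] at hk
    have e1 : m + 1 - 1 - k = m - k := by omega
    have e2 : (m - k) + 1 = m + 1 - k := by omega
    rw [e1, e2, Finset.mul_sum, Finset.mul_sum]
    refine Finset.sum_congr rfl fun i hi => ?_
    rw [Nat.cast_choose ℝ (by omega : m - k ≤ m)]
    rw [show m - (m - k) = k from by omega]
    have f1 : ((m-k).factorial : ℝ) ≠ 0 := Nat.cast_ne_zero.mpr (Nat.factorial_ne_zero _)
    have f2 : (k.factorial : ℝ) ≠ 0 := Nat.cast_ne_zero.mpr (Nat.factorial_ne_zero _)
    field_simp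
  rw [Finset.sum_congr rfl h1, mydiag m]
  have h2 : ∀ s ∈ range (m+1),
      (∑ k ∈ range (s+1), ((m.factorial : ℝ) / k.factorial) * ((-1:ℝ)^(s-k) / (s-k).factorial))
      = if s = 0 then (m.factorial : ℝ) else 0 := by
    intro s hs
    have h3 : ∀ k ∈ range (s+1),
        ((m.factorial : ℝ) / k.factorial) * ((-1:ℝ)^(s-k) / (s-k).factorial)
        = ((m.factorial : ℝ) / s.factorial) * ((-1:ℝ)^s * ((-1:ℝ)^k * (s.choose k))) := by
      intro k hk
      rw [mem_range] at hk
      have hks : k ≤ s := by omega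
      have e4 : (-1:ℝ)^(s-k) = (-1:ℝ)^s * (-1:ℝ)^k := by
        rw [← pow_add, show s + k = s - k + 2*k from by omega, pow_add, pow_mul]
        norm_num
      rw [e4, Nat.cast_choose ℝ hks]
      have f1 : ((s-k).factorial : ℝ) ≠ 0 := Nat.cast_ne_zero.mpr (Nat.factorial_ne_zero _)
      have f2 : (k.factorial : ℝ) ≠ 0 := Nat.cast_ne_zero.mpr (Nat.factorial_ne_zero _)
      have f3 : (s.factorial : ℝ) ≠ 0 := Nat.cast_ne_zero.mpr (Nat.factorial_ne_zero _)
      field_simp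
    rw [Finset.sum_congr rfl h3]
    rw [← Finset.mul_sum, ← Finset.mul_sum, realAlt' s]
    by_cases h0 : s = 0 <;> simp [h0, Nat.factorial]
  rw [Finset.sum_congr rfl h2]
  simp

open Finset in
private lemma mytri {M : Type*} [AddCommMonoid M] (N : ℕ) (g : ℕ → ℕ → M) :
    ∑ k ∈ range (N+1), ∑ j ∈ range (N+1-k), g k j
      = ∑ j ∈ range (N+1), ∑ k ∈ range (N+1-j), g k j := by
  rw [Finset.sum_sigma', Finset.sum_sigma']
  refine Finset.sum_nbij' (fun x : Σ _ : ℕ, ℕ ↦ (⟨x.2, x.1⟩ : Σ _ : ℕ, ℕ))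
    (fun x : Σ _ : ℕ, ℕ ↦ (⟨x.2, x.1⟩ : Σ _ : ℕ, ℕ)) ?_ ?_ (fun _ _ ↦ rfl)
    (fun _ _ ↦ rfl) (fun _ _ ↦ rfl) <;>
  simp only [Finset.mem_sigma, Finset.mem_range, Sigma.forall] <;>
  (intro a b h; omega)

open Finset in
private lemma mytri2 {M : Type*} [AddCommMonoid M] (N : ℕ) (g : ℕ → ℕ → M) :
    ∑ l ∈ range (N+1), ∑ j ∈ range (l+1), g l j
      = ∑ j ∈ range (N+1), ∑ u ∈ range (N+1-j), g (j+u) j := by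
  rw [Finset.sum_sigma', Finset.sum_sigma']
  refine Finset.sum_nbij' (fun x : Σ _ : ℕ, ℕ ↦ (⟨x.2, x.1 - x.2⟩ : Σ _ : ℕ, ℕ))
    (fun x : Σ _ : ℕ, ℕ ↦ (⟨x.1 + x.2, x.1⟩ : Σ _ : ℕ, ℕ)) ?_ ?_ ?_ ?_ ?_ <;>
  simp only [Finset.mem_sigma, Finset.mem_range, Sigma.forall] <;>
  intro a b h
  · omega
  · omega
  · exact Sigma.ext (by simp; omega) (by simp; try omega)
  · exact Sigma.ext (by simp) (by simp)
  · (congr 1; omega)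

open Finset in
private lemma lemA (E : ℕ → ℝ)
    (hE : ∀ m, ∑ k ∈ range (m+1), (m.choose k : ℝ) * E k = (m.factorial : ℝ))
    (l : ℕ) (x : ℝ) :
    ∑ k ∈ range (l+1), (l.choose k : ℝ) * E k * (1-x)^(l-k)
      = ∑ j ∈ range (l+1), ((l.factorial : ℝ) / j.factorial) * (-x)^j := by
  have expand : ∀ k ∈ range (l+1), (l.choose k:ℝ) * E k * (1-x)^(l-k)
      = ∑ j ∈ range (l+1-k), (l.choose k:ℝ) * E k * (((l-k).choose j : ℝ) * (-x)^j) := by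
    intro k hk
    rw [mem_range] at hk
    have hb : (1-x)^(l-k) = ∑ j ∈ range (l+1-k), ((l-k).choose j : ℝ) * (-x)^j := by
      rw [show (1 - x) = -x + 1 by ring, add_pow,
          show l - k + 1 = l + 1 - k from by omega]
      exact Finset.sum_congr rfl fun j hj => by rw [one_pow]; ring
    rw [hb, Finset.mul_sum]
  rw [Finset.sum_congr rfl expand, mytri l]
  refine Finset.sum_congr rfl fun j hj => ?_
  rw [mem_range] at hj
  have h1 : ∀ k ∈ range (l+1-j), (l.choose k:ℝ) * E k * (((l-k).choose j:ℝ) * (-x)^j)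
      = ((l.choose j : ℝ) * (((l-j).choose k : ℝ) * E k)) * (-x)^j := by
    intro k hk
    rw [mem_range] at hk
    have n1 : (k.factorial : ℝ) ≠ 0 := Nat.cast_ne_zero.mpr (Nat.factorial_ne_zero _)
    have n2 : ((l-k).factorial : ℝ) ≠ 0 := Nat.cast_ne_zero.mpr (Nat.factorial_ne_zero _)
    have n3 : (j.factorial : ℝ) ≠ 0 := Nat.cast_ne_zero.mpr (Nat.factorial_ne_zero _)
    have n4 : ((l-j).factorial : ℝ) ≠ 0 := Nat.cast_ne_zero.mpr (Nat.factorial_ne_zero _)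
    have n5 : ((l-j-k).factorial : ℝ) ≠ 0 := Nat.cast_ne_zero.mpr (Nat.factorial_ne_zero _)
    have hc : (l.choose k : ℝ) * ((l-k).choose j:ℝ) = (l.choose j:ℝ) * ((l-j).choose k:ℝ) := by
      rw [Nat.cast_choose ℝ (show k ≤ l by omega), Nat.cast_choose ℝ (show j ≤ l - k by omega),
          Nat.cast_choose ℝ (show j ≤ l by omega), Nat.cast_choose ℝ (show k ≤ l - j by omega),
          show l - k - j = l - j - k from by omega]
      field_simp
    linear_combination E k * (-x)^j * hc
  rw [Finset.sum_congr rfl h1, ← Finset.sum_mul, ← Finset.mul_sum,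
      show l + 1 - j = (l - j) + 1 from by omega, hE (l-j),
      Nat.cast_choose ℝ (show j ≤ l by omega)]
  have n3 : (j.factorial : ℝ) ≠ 0 := Nat.cast_ne_zero.mpr (Nat.factorial_ne_zero _)
  have n4 : ((l-j).factorial : ℝ) ≠ 0 := Nat.cast_ne_zero.mpr (Nat.factorial_ne_zero _)
  field_simp

open Finset in
theorem stmt_11 (D : ℕ → ℝ)
    (hD : ∀ k, D k = (k.factorial : ℝ) *
      ∑ i ∈ Finset.range (k + 1), (-1 : ℝ) ^ i / i.factorial)
    (Dp : ℕ → ℝ → ℝ)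
    (hDp : ∀ l y, Dp l y = ∑ k ∈ Finset.range (l + 1), (l.choose k : ℝ) * D k * y ^ (l - k))
    (a : ℕ → ℝ) (ha : ∀ k, a k = k.factorial)
    (Da : ℕ → ℝ → ℝ)
    (hDa : ∀ n x, Da n x = ∑ l ∈ Finset.range (n + 1),
      (n.choose l : ℝ) *
        ((l.factorial : ℝ) * ∑ m ∈ Finset.range (l + 1), (-1 : ℝ) ^ m * a m / m.factorial) *
        x ^ (n - l))
    (n : ℕ) (x : ℝ) :
    Da n x = (n.factorial : ℝ) *
      ∑ l ∈ Finset.range (n + 1), (-1 : ℝ) ^ l * Dp l (1 - x) / l.factorial := by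
  -- the "moment polynomial" coefficients E k = D k
  set E : ℕ → ℝ := fun k => (k.factorial : ℝ) * ∑ i ∈ range (k+1), (-1:ℝ)^i / i.factorial with hEdef
  have hE : ∀ m, ∑ k ∈ range (m+1), (m.choose k : ℝ) * E k = (m.factorial : ℝ) := fun m => sumB m
  -- closed form for Dp l (1 - x)
  have hDpl : ∀ l, Dp l (1-x) = ∑ j ∈ range (l+1), ((l.factorial:ℝ)/j.factorial) * (-x)^j := by
    intro l
    rw [hDp]
    have h0 : ∀ k ∈ range (l+1), (l.choose k:ℝ) * D k * (1-x)^(l-k)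
        = (l.choose k:ℝ) * E k * (1-x)^(l-k) := by
      intro k _; rw [hD, hEdef]
    rw [Finset.sum_congr rfl h0]
    exact lemA E hE l x
  -- simplify the inner sum on the LHS
  have hinner : ∀ l : ℕ, ∑ m ∈ range (l+1), (-1:ℝ)^m * a m / m.factorial
      = if Even l then 1 else 0 := by
    intro l
    have h0 : ∀ m ∈ range (l+1), (-1:ℝ)^m * a m / m.factorial = (-1:ℝ)^m := by
      intro m _
      rw [ha]
      have : ((m.factorial : ℝ)) ≠ 0 := Nat.cast_ne_zero.mpr (Nat.factorial_ne_zero _)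
      field_simp
    rw [Finset.sum_congr rfl h0, neg_one_geom_sum]
    by_cases h : Even l <;> simp [h, Nat.even_add_one]
  -- rewrite RHS
  have hR : ∀ l ∈ range (n+1), (-1:ℝ)^l * Dp l (1-x) / l.factorial
      = ∑ j ∈ range (l+1), (-1:ℝ)^l * (((l.factorial:ℝ)/j.factorial) * (-x)^j) / l.factorial := by
    intro l _
    rw [hDpl l, Finset.mul_sum, Finset.sum_div]
  rw [hDa n x, Finset.sum_congr rfl hR,
      mytri2 n (fun l j => (-1:ℝ)^l * (((l.factorial:ℝ)/j.factorial) * (-x)^j) / l.factorial)]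
  -- simplify each inner RHS sum
  have hterm : ∀ j ∈ range (n+1),
      ∑ u ∈ range (n+1-j), (-1:ℝ)^(j+u) * ((((j+u).factorial:ℝ)/j.factorial) * (-x)^j) / ((j+u).factorial)
      = (x^j / j.factorial) * (if Even (n+1-j) then 0 else 1) := by
    intro j hj
    rw [mem_range] at hj
    have h0 : ∀ u ∈ range (n+1-j),
        (-1:ℝ)^(j+u) * ((((j+u).factorial:ℝ)/j.factorial) * (-x)^j) / ((j+u).factorial)
        = (x^j / j.factorial) * (-1:ℝ)^u := by
      intro u _
      have nf : (((j+u).factorial : ℝ)) ≠ 0 := Nat.cast_ne_zero.mpr (Nat.factorial_ne_zero _)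
      have nj : ((j.factorial : ℝ)) ≠ 0 := Nat.cast_ne_zero.mpr (Nat.factorial_ne_zero _)
      have hjj : (-1:ℝ)^(j*2) = 1 := by rw [mul_comm, pow_mul]; norm_num
      rw [pow_add, neg_pow]
      field_simp
      linear_combination x^j * hjj
    rw [Finset.sum_congr rfl h0, ← Finset.mul_sum, neg_one_geom_sum]
  rw [Finset.sum_congr rfl hterm]
  -- reflect the LHS sum
  rw [← Finset.sum_range_reflect, Finset.mul_sum]
  refine Finset.sum_congr rfl fun j hj => ?_
  rw [mem_range] at hj
  rw [hinner]
  have e1 : n + 1 - 1 - j = n - j := by omega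
  have e2 : n - (n - j) = j := by omega
  have e3 : Even (n + 1 - j) ↔ ¬ Even (n - j) := by
    rw [show n + 1 - j = (n - j) + 1 from by omega, Nat.even_add_one]
  rw [e1, e2]
  have nj : ((j.factorial : ℝ)) ≠ 0 := Nat.cast_ne_zero.mpr (Nat.factorial_ne_zero _)
  have nnj : (((n-j).factorial : ℝ)) ≠ 0 := Nat.cast_ne_zero.mpr (Nat.factorial_ne_zero _)
  by_cases hev : Even (n - j)
  · rw [if_pos hev, if_neg ((not_not.mpr hev) ∘ e3.mp)]
    rw [Nat.cast_choose ℝ (show n - j ≤ n by omega), e2]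
    field_simp
  · rw [if_neg hev, if_pos (by rw [e3]; exact hev)]
    simp
end

section
/- For every natural number n and every real p, the improper integral ∫_0^∞ (x - 1 + p)^n * e^{-x} dx equals the derangement polynomial D_n(p) := ∑_{k=0}^{n} C(n,k) * D_k * p^{n-k}, where D_k = k! * ∑_{i=0}^{k} (-1)^i/i! is the k-th derangement number. -/
open MeasureTheory Finset

lemma int_pow_exp (j : ℕ) :
    ∫ x in Set.Ioi (0:ℝ), x ^ j * Real.exp (-x) = (j.factorial : ℝ) := by
  have h := Real.Gamma_nat_eq_factorial j
  rw [Real.Gamma_eq_integral (by positivity : (0:ℝ) < j + 1)] at h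
  rw [← h]
  refine setIntegral_congr_fun measurableSet_Ioi (fun x hx => ?_)
  have hx' : (0:ℝ) < x := hx
  rw [add_sub_cancel_right, Real.rpow_natCast, mul_comm]

lemma int_pow_exp_integrable (j : ℕ) :
    MeasureTheory.IntegrableOn (fun x : ℝ => x ^ j * Real.exp (-x)) (Set.Ioi 0) := by
  have h := Real.GammaIntegral_convergent (show (0:ℝ) < j + 1 by positivity)
  refine h.congr_fun (fun x hx => ?_) measurableSet_Ioi
  have hx' : (0:ℝ) < x := hx
  rw [add_sub_cancel_right]
  beta_reduce
  rw [Real.rpow_natCast, mul_comm]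

lemma D_alt (k : ℕ) : (k.factorial : ℝ) * ∑ i ∈ Finset.range (k+1), (-1:ℝ)^i / i.factorial
    = ∑ i ∈ Finset.range (k+1), (k.choose i : ℝ) * i.factorial * (-1:ℝ)^(k-i) := by
  rw [Finset.mul_sum, ← Finset.sum_range_reflect
    (fun i => (k.choose i : ℝ) * i.factorial * (-1:ℝ)^(k-i))]
  refine Finset.sum_congr rfl fun i hi => ?_
  rw [Finset.mem_range, Nat.lt_succ_iff] at hi
  have h1 : k + 1 - 1 - i = k - i := by omega
  have h2 : k - (k - i) = i := by omega
  rw [h1, h2, Nat.choose_symm hi]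
  have hfac : ((k.choose i : ℝ)) * i.factorial * (k-i).factorial = k.factorial := by
    exact_mod_cast congrArg Nat.cast (Nat.choose_mul_factorial_mul_factorial hi)
  have hi0 : (i.factorial : ℝ) ≠ 0 := by
    exact_mod_cast i.factorial_ne_zero
  rw [mul_div_assoc', div_eq_iff hi0]
  linear_combination (-(-1:ℝ)^i) * hfac

lemma main_sum (n : ℕ) (p : ℝ) :
    ∑ k ∈ Finset.range (n+1), (n.choose k : ℝ) *
        (∑ i ∈ Finset.range (k+1), (k.choose i : ℝ) * i.factorial * (-1:ℝ)^(k-i)) * p^(n-k)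
    = ∑ j ∈ Finset.range (n+1), (p-1)^(n-j) * (n.choose j : ℝ) * j.factorial := by
  have step1 : ∀ k ∈ Finset.range (n+1),
      (n.choose k : ℝ) * (∑ i ∈ Finset.range (k+1),
          (k.choose i : ℝ) * i.factorial * (-1:ℝ)^(k-i)) * p^(n-k)
      = ∑ i ∈ Finset.range (k+1),
          (n.choose k : ℝ) * ((k.choose i : ℝ) * i.factorial * (-1:ℝ)^(k-i)) * p^(n-k) := by
    intro k _
    rw [Finset.mul_sum, Finset.sum_mul]
  rw [Finset.sum_congr rfl step1]
  rw [Finset.sum_comm' (t' := Finset.range (n+1)) (s' := fun i => Finset.Icc i n)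
    (by intro k i; simp [Nat.lt_succ_iff, Finset.mem_Icc]; omega)]
  refine Finset.sum_congr rfl fun i hi => ?_
  rw [Finset.mem_range, Nat.lt_succ_iff] at hi
  have hIcc : Finset.Icc i n = Finset.Ico i (n+1) := by
    rw [Finset.Ico_add_one_right_eq_Icc]
  rw [hIcc, Finset.sum_Ico_eq_sum_range]
  have hrange : n + 1 - i = (n - i) + 1 := by omega
  rw [hrange]
  have expand : ((p - 1) : ℝ)^(n-i) = ∑ m ∈ Finset.range (n-i+1),
      (-1:ℝ)^m * p^(n-i-m) * ((n-i).choose m : ℝ) := by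
    have := add_pow (-1 : ℝ) p (n - i)
    simp only [neg_add_eq_sub] at this
    rw [this]
  rw [expand, Finset.sum_mul, Finset.sum_mul]
  refine Finset.sum_congr rfl fun m hm => ?_
  rw [Finset.mem_range, Nat.lt_succ_iff] at hm
  have h1 : i + m - i = m := by omega
  have h2 : i + m - i + (i + m - (i + m)) = m := by omega
  have hchoose : (n.choose (i+m) : ℝ) * ((i+m).choose i : ℝ)
      = (n.choose i : ℝ) * ((n-i).choose m : ℝ) := by
    have := Nat.choose_mul (n := n) (show i ≤ i + m by omega)
    rw [h1] at this
    exact_mod_cast congrArg Nat.cast this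
  have h3 : i + m - i = m := h1
  have h4 : n - (i + m) = n - i - m := by omega
  rw [h3, h4]
  linear_combination ((i.factorial : ℝ) * (-1:ℝ)^m * p^(n-i-m)) * hchoose

theorem stmt_12 (D : ℕ → ℝ)
    (hD : ∀ k, D k = (k.factorial : ℝ) *
      ∑ i ∈ Finset.range (k + 1), (-1 : ℝ) ^ i / i.factorial)
    (n : ℕ) (p : ℝ) :
    ∫ x in Set.Ioi (0 : ℝ), (x - 1 + p) ^ n * Real.exp (-x) =
      ∑ k ∈ Finset.range (n + 1), (n.choose k : ℝ) * D k * p ^ (n - k) := by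
  have key : ∀ x : ℝ, (x - 1 + p)^n * Real.exp (-x)
      = ∑ j ∈ Finset.range (n+1),
          (p-1)^(n-j) * (n.choose j : ℝ) * (x ^ j * Real.exp (-x)) := by
    intro x
    rw [show x - 1 + p = x + (p-1) by ring, add_pow, Finset.sum_mul]
    exact Finset.sum_congr rfl fun j hj => by ring
  simp_rw [key]
  rw [MeasureTheory.integral_finset_sum _
    (fun j _ => ((int_pow_exp_integrable j).const_mul _))]
  simp_rw [integral_const_mul, int_pow_exp]
  rw [show (∑ k ∈ Finset.range (n + 1), (n.choose k : ℝ) * D k * p ^ (n - k))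
      = ∑ k ∈ Finset.range (n+1), (n.choose k : ℝ) *
        (∑ i ∈ Finset.range (k+1), (k.choose i : ℝ) * i.factorial * (-1:ℝ)^(k-i)) * p^(n-k)
    from Finset.sum_congr rfl fun k _ => by rw [hD k, D_alt]]
  rw [main_sum]
end

section
/- Let a : ℕ → ℝ with a(0) = 1 and let r ≥ 1. Define d_n := ∑_{k=r}^{n} C(k,r) (-1)^{n-k} a(n-k)/(n-k)! for n ≥ r (so that D^{(r,a)}_n = n! * d_n). Then for all n ≥ r: ∑_{l=r}^{n} C(l-1,r-1) * (∑_{m=0}^{n-l} (-1)^m a(m)/m!) = ∑_{k=r}^{n} C(k,r) (-1)^{n-k} a(n-k)/(n-k)!. -/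
/-!
Substituting `k = n - m` turns the left side into a double sum over `r ≤ l ≤ k ≤ n`;
summing over `l` first, the coefficient of the `k`-th term is the hockey-stick sum
`∑_{l=r}^{k} C(l-1, r-1) = C(k, r)`.
-/

open Finset

theorem Nat.sum_Icc_choose_pred {r : ℕ} (hr : 1 ≤ r) (N : ℕ) :
    ∑ l ∈ Icc r N, (l - 1).choose (r - 1) = N.choose r := by
  obtain ⟨s, rfl⟩ := Nat.exists_eq_add_of_le' hr
  cases N with
  | zero => simp
  | succ M =>
    rw [← Nat.sum_Icc_choose M s, ← Finset.map_add_right_Icc s M 1, sum_map]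
    simp

section

variable {R : Type*} [CommSemiring R]

theorem Finset.sum_range_sub_add_one_eq_sum_Icc (t : ℕ → R) {l n : ℕ} (h : l ≤ n) :
    ∑ m ∈ range (n - l + 1), t m = ∑ k ∈ Icc l n, t (n - k) := by
  refine sum_nbij' (n - ·) (n - ·) ?_ ?_ ?_ ?_ ?_ <;> intro x hx <;>
    simp only [mem_range, mem_Icc] at hx ⊢ <;> first | omega | congr 1; omega

theorem Finset.sum_Icc_mul_sum_range_eq (c t : ℕ → R) (r n : ℕ) :
    ∑ l ∈ Icc r n, c l * ∑ m ∈ range (n - l + 1), t m =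
      ∑ k ∈ Icc r n, (∑ l ∈ Icc r k, c l) * t (n - k) := by
  calc ∑ l ∈ Icc r n, c l * ∑ m ∈ range (n - l + 1), t m
      = ∑ l ∈ Icc r n, ∑ k ∈ Icc l n, c l * t (n - k) := by
        refine sum_congr rfl fun l hl => ?_
        rw [sum_range_sub_add_one_eq_sum_Icc t (mem_Icc.mp hl).2, mul_sum]
    _ = ∑ k ∈ Icc r n, ∑ l ∈ Icc r k, c l * t (n - k) :=
        sum_comm' fun l k => by simp only [mem_Icc]; omega
    _ = ∑ k ∈ Icc r n, (∑ l ∈ Icc r k, c l) * t (n - k) := by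
        simp only [sum_mul]

end

theorem stmt_15_general (a : ℕ → ℝ) (r : ℕ) (hr : 1 ≤ r)
    (n : ℕ) :
    ∑ l ∈ Finset.Icc r n, ((l - 1).choose (r - 1) : ℝ) *
        (∑ m ∈ Finset.range (n - l + 1), (-1 : ℝ) ^ m * a m / m.factorial) =
      ∑ k ∈ Finset.Icc r n,
        (k.choose r : ℝ) * (-1 : ℝ) ^ (n - k) * a (n - k) / (n - k).factorial := by
  rw [sum_Icc_mul_sum_range_eq]
  refine sum_congr rfl fun k _ => ?_
  rw [← Nat.cast_sum, Nat.sum_Icc_choose_pred hr]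
  ring

theorem stmt_15 (a : ℕ → ℝ) (ha : a 0 = 1) (r : ℕ) (hr : 1 ≤ r)
    (n : ℕ) (hn : r ≤ n) :
    ∑ l ∈ Finset.Icc r n, ((l - 1).choose (r - 1) : ℝ) *
        (∑ m ∈ Finset.range (n - l + 1), (-1 : ℝ) ^ m * a m / m.factorial) =
      ∑ k ∈ Finset.Icc r n,
        (k.choose r : ℝ) * (-1 : ℝ) ^ (n - k) * a (n - k) / (n - k).factorial :=
  stmt_15_general a r hr n
end
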